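/- Let G be a group and let x, y, z be elements of G with x ∈ γ_a(G), y ∈ γ_b(G), z ∈ γ_c(G), where a + b + c = n. Then the product [x,y,z]·[y,z,x]·[z,x,y] lies in γ_{n+1}(G), where [x,y,z] denotes the left-normed commutator [[x,y],z]. -/

import Mathlib

/-- The commutator `[x,y] = x⁻¹y⁻¹xy` (the convention used in the paper). -/
def commE {G : Type*} [Group G] (x y : G) : G := x⁻¹ * y⁻¹ * x * y

/-- The left-normed commutator `[x,y,z] = [[x,y],z]`. -/
def commE3 {G : Type*} [Group G] (x y z : G) : G := commE (commE x y) z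

/-!
Pass to `Q = G ⧸ γ_{n+1}(G)`. There every commutator of total weight at least `n + 1` is trivial,
so the weight-`n` commutators `[x,y,z]`, `[y,z,x]`, `[z,x,y]` are central, and modulo weight
`n + 1` the conjugate `[x,y⁻¹,z]^y` equals `[x,y,z]⁻¹`. The Hall–Witt identity
`[x,y⁻¹,z]^y [y,z⁻¹,x]^z [z,x⁻¹,y]^x = 1` then says that the product of the inverses of the three
central elements is trivial.
-/

namespace Subgroup

variable {G : Type*} [Group G]

theorem commutator_commutator_le_of_rotate {H₁ H₂ H₃ N : Subgroup G} [N.Normal]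
    (h₁ : ⁅⁅H₂, H₃⁆, H₁⁆ ≤ N) (h₂ : ⁅⁅H₃, H₁⁆, H₂⁆ ≤ N) : ⁅⁅H₁, H₂⁆, H₃⁆ ≤ N := by
  have reduce : ∀ A B C : Subgroup G, ⁅⁅A, B⁆, C⁆ ≤ N ↔
      ⁅⁅A.map (QuotientGroup.mk' N), B.map (QuotientGroup.mk' N)⁆, C.map (QuotientGroup.mk' N)⁆
        = ⊥ := by
    intro A B C
    rw [← map_commutator, ← map_commutator, map_eq_bot_iff, QuotientGroup.ker_mk']
  rw [reduce] at h₁ h₂ ⊢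
  exact commutator_commutator_eq_bot_of_rotate h₁ h₂

theorem commutator_lowerCentralSeries_le (i j : ℕ) :
    ⁅(⊤ : Subgroup G).lowerCentralSeries i, (⊤ : Subgroup G).lowerCentralSeries j⁆ ≤
      (⊤ : Subgroup G).lowerCentralSeries (i + j + 1) := by
  induction j generalizing i with
  | zero => exact le_rfl
  | succ j ih =>
    rw [lowerCentralSeries_succ, commutator_comm]
    apply commutator_commutator_le_of_rotate
    · rw [commutator_comm ⊤, ← lowerCentralSeries_succ]
      exact (ih (i + 1)).trans
        (lowerCentralSeries_antitone _ (by omega : i + (j + 1) + 1 ≤ i + 1 + j + 1))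
    · exact commutator_mono (ih i) le_rfl

end Subgroup

section Commutators

variable {G : Type*} [Group G]

open scoped commutatorElement in
theorem commE_eq_commutatorElement (x y : G) : commE x y = ⁅x⁻¹, y⁻¹⁆ := by
  simp [commE, commutatorElement_def]

theorem commE_eq_one_iff_commute {x y : G} : commE x y = 1 ↔ Commute x y := by
  rw [commE_eq_commutatorElement, commutatorElement_eq_one_iff_commute, Commute.inv_inv_iff]

theorem map_commE {H : Type*} [Group H] (f : G →* H) (x y : G) :
    f (commE x y) = commE (f x) (f y) := by
  simp [commE]

theorem map_commE3 {H : Type*} [Group H] (f : G →* H) (x y z : G) :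
    f (commE3 x y z) = commE3 (f x) (f y) (f z) := by
  simp [commE3, map_commE]

theorem commE_hall_witt (x y z : G) :
    (y⁻¹ * commE (commE x y⁻¹) z * y) * (z⁻¹ * commE (commE y z⁻¹) x * z) *
      (x⁻¹ * commE (commE z x⁻¹) y * x) = 1 := by
  simp only [commE]; group

theorem conj_commE_commE_inv_eq_inv_commE3 {x y z : G}
    (hcentral : ∀ g : G, Commute (commE3 x y z) g)
    (hhigher : commE (commE (commE x y)⁻¹ y⁻¹) z = 1) (g : G) :
    g⁻¹ * commE (commE x y⁻¹) z * g = (commE3 x y z)⁻¹ := by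
  set c := commE x y
  set w := commE c⁻¹ y⁻¹
  have hconj : ∀ p : G, p⁻¹ * (commE3 x y z)⁻¹ * p = (commE3 x y z)⁻¹ := fun p => by
    rw [mul_assoc, ((hcentral p).inv_left).eq, inv_mul_cancel_left]
  -- `[x,y⁻¹] = c⁻¹ w`, and `[c⁻¹ w, z] = [c⁻¹, z]^w [w, z]` with `[c⁻¹, z] = ([c, z]⁻¹)^{c⁻¹}`.
  have hexpand :
      commE (commE x y⁻¹) z = w⁻¹ * (c * (commE3 x y z)⁻¹ * c⁻¹) * w * commE w z := by
    simp only [w, c, commE3, commE]; group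
  have hconj_c : c * (commE3 x y z)⁻¹ * c⁻¹ = (commE3 x y z)⁻¹ := by simpa using hconj c⁻¹
  rw [hexpand, hhigher, mul_one, hconj_c, hconj, hconj]

end Commutators

section LowerCentralSeries

variable {G : Type*} [Group G] {m : ℕ}

theorem commE_mem_lowerCentralSeries {x y : G} {i j : ℕ}
    (hx : x ∈ (⊤ : Subgroup G).lowerCentralSeries i)
    (hy : y ∈ (⊤ : Subgroup G).lowerCentralSeries j) :
    commE x y ∈ (⊤ : Subgroup G).lowerCentralSeries (i + j + 1) := by
  rw [commE_eq_commutatorElement]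
  exact Subgroup.commutator_lowerCentralSeries_le i j
    (Subgroup.commutator_mem_commutator (inv_mem hx) (inv_mem hy))

theorem commE3_mem_lowerCentralSeries {x y z : G} {i j k : ℕ}
    (hx : x ∈ (⊤ : Subgroup G).lowerCentralSeries i)
    (hy : y ∈ (⊤ : Subgroup G).lowerCentralSeries j)
    (hz : z ∈ (⊤ : Subgroup G).lowerCentralSeries k) :
    commE3 x y z ∈ (⊤ : Subgroup G).lowerCentralSeries (i + j + k + 2) := by
  have := commE_mem_lowerCentralSeries (commE_mem_lowerCentralSeries hx hy) hz
  rwa [show i + j + 1 + k + 1 = i + j + k + 2 by omega] at this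

theorem commE_eq_one_of_lowerCentralSeries_eq_bot
    (hbot : (⊤ : Subgroup G).lowerCentralSeries m = ⊥) {x y : G} {i j : ℕ}
    (hx : x ∈ (⊤ : Subgroup G).lowerCentralSeries i)
    (hy : y ∈ (⊤ : Subgroup G).lowerCentralSeries j) (hm : m ≤ i + j + 1) :
    commE x y = 1 := by
  have := Subgroup.lowerCentralSeries_antitone _ hm (commE_mem_lowerCentralSeries hx hy)
  rwa [hbot, Subgroup.mem_bot] at this

theorem commute_of_lowerCentralSeries_eq_bot
    (hbot : (⊤ : Subgroup G).lowerCentralSeries m = ⊥) {x : G} {i : ℕ}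
    (hx : x ∈ (⊤ : Subgroup G).lowerCentralSeries i) (hm : m ≤ i + 1) (g : G) :
    Commute x g :=
  commE_eq_one_iff_commute.mp
    (commE_eq_one_of_lowerCentralSeries_eq_bot hbot hx (j := 0) (Subgroup.mem_top g) hm)

theorem conj_commE_commE_inv_eq_inv_commE3_of_lowerCentralSeries_eq_bot
    (hbot : (⊤ : Subgroup G).lowerCentralSeries m = ⊥) {x y z : G} {i j k : ℕ}
    (hx : x ∈ (⊤ : Subgroup G).lowerCentralSeries i)
    (hy : y ∈ (⊤ : Subgroup G).lowerCentralSeries j)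
    (hz : z ∈ (⊤ : Subgroup G).lowerCentralSeries k) (hm : m ≤ i + j + k + 3) (g : G) :
    g⁻¹ * commE (commE x y⁻¹) z * g = (commE3 x y z)⁻¹ := by
  have hxy := commE_mem_lowerCentralSeries hx hy
  exact conj_commE_commE_inv_eq_inv_commE3
    (commute_of_lowerCentralSeries_eq_bot hbot (commE3_mem_lowerCentralSeries hx hy hz)
      (by omega))
    (commE_eq_one_of_lowerCentralSeries_eq_bot hbot
      (commE_mem_lowerCentralSeries (inv_mem hxy) (inv_mem hy)) hz (by omega)) g

theorem commE3_mul_commE3_mul_commE3_eq_one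
    (hbot : (⊤ : Subgroup G).lowerCentralSeries m = ⊥) {x y z : G} {i j k : ℕ}
    (hx : x ∈ (⊤ : Subgroup G).lowerCentralSeries i)
    (hy : y ∈ (⊤ : Subgroup G).lowerCentralSeries j)
    (hz : z ∈ (⊤ : Subgroup G).lowerCentralSeries k) (hm : m ≤ i + j + k + 3) :
    commE3 x y z * commE3 y z x * commE3 z x y = 1 := by
  have hcentral_xyz := commute_of_lowerCentralSeries_eq_bot hbot
    (commE3_mem_lowerCentralSeries hx hy hz) (by omega)
  have hcentral_zxy := commute_of_lowerCentralSeries_eq_bot hbot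
    (commE3_mem_lowerCentralSeries hz hx hy) (by omega)
  have hHW := commE_hall_witt x y z
  rw [conj_commE_commE_inv_eq_inv_commE3_of_lowerCentralSeries_eq_bot hbot hx hy hz hm,
    conj_commE_commE_inv_eq_inv_commE3_of_lowerCentralSeries_eq_bot hbot hy hz hx (by omega),
    conj_commE_commE_inv_eq_inv_commE3_of_lowerCentralSeries_eq_bot hbot hz hx hy (by omega),
    ← mul_inv_rev, ← mul_inv_rev, inv_eq_one] at hHW
  calc commE3 x y z * commE3 y z x * commE3 z x y
      = commE3 z x y * commE3 y z x * commE3 x y z := by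
        rw [(hcentral_zxy _).symm.eq, mul_assoc, (hcentral_xyz _).eq, ← mul_assoc]
    _ = 1 := (mul_assoc _ _ _).trans hHW

theorem map_mem_lowerCentralSeries {H : Type*} [Group H] (f : G →* H) {x : G} {i : ℕ}
    (hx : x ∈ (⊤ : Subgroup G).lowerCentralSeries i) :
    f x ∈ (⊤ : Subgroup H).lowerCentralSeries i := by
  have := Subgroup.mem_map_of_mem f hx
  rw [Subgroup.map_lowerCentralSeries] at this
  exact Subgroup.lowerCentralSeries_mono i le_top this

theorem lowerCentralSeries_quotient_lowerCentralSeries_eq_bot (n : ℕ) :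
    (⊤ : Subgroup (G ⧸ (⊤ : Subgroup G).lowerCentralSeries n)).lowerCentralSeries n = ⊥ := by
  rw [← Subgroup.map_top_of_surjective _ (QuotientGroup.mk'_surjective _),
    ← Subgroup.map_lowerCentralSeries, Subgroup.map_eq_bot_iff, QuotientGroup.ker_mk']

end LowerCentralSeries

/-- Let `G` be a group and let `x, y, z ∈ G` with `x ∈ γ_a(G)`,
`y ∈ γ_b(G)`, `z ∈ γ_c(G)`, where `a + b + c = n`. Then
`[x,y,z]·[y,z,x]·[z,x,y] ∈ γ_{n+1}(G)`, where `[x,y,z] = [[x,y],z]`.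
Here `γ_k(G) = lowerCentralSeries G (k-1)`, so `γ_{n+1}(G) = lowerCentralSeries G n`. -/
theorem jacobi_type_identity_lower_central
    (G : Type*) [Group G] (x y z : G) (a b c n : ℕ)
    (ha : 1 ≤ a) (hb : 1 ≤ b) (hc : 1 ≤ c) (habc : a + b + c = n)
    (hx : x ∈ (⊤ : Subgroup G).lowerCentralSeries (a - 1))
    (hy : y ∈ (⊤ : Subgroup G).lowerCentralSeries (b - 1))
    (hz : z ∈ (⊤ : Subgroup G).lowerCentralSeries (c - 1)) :
    commE3 x y z * commE3 y z x * commE3 z x y ∈ (⊤ : Subgroup G).lowerCentralSeries n := by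
  let f := QuotientGroup.mk' ((⊤ : Subgroup G).lowerCentralSeries n)
  have key := commE3_mul_commE3_mul_commE3_eq_one
    (lowerCentralSeries_quotient_lowerCentralSeries_eq_bot n) (map_mem_lowerCentralSeries f hx)
    (map_mem_lowerCentralSeries f hy) (map_mem_lowerCentralSeries f hz) (by omega)
  rwa [← map_commE3, ← map_commE3, ← map_commE3, ← map_mul, ← map_mul,
    QuotientGroup.mk'_apply, QuotientGroup.eq_one_iff] at key
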